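/- arXiv:1703.09909 — 2 statements merged into one kernel-verified Lean document; each statement's English description precedes it below -/
import Mathlib

section
/- Under the assumptions of the previous context, for 0 < p < 4/N the infimum I(c) = inf_{u ∈ S_c} E(u) equals inf_{t>0} f_p(t) = f_p(t_p), where t_p is the unique minimizer of f_p on (0,∞). -/
open MeasureTheory

/-- For `0 < p < 4/N`, the infimum `I(c) = inf_{u ∈ S_c} E(u)` of the Kirchhoff
energy over the `L²`-sphere of radius `c` equals `f_p(t_p)`, where `t_p` is the
unique minimizer of the fiber function `f_p` on `(0, ∞)`. -/
theorem stmt12 (N : ℕ) (hN : N ∈ ({1, 2, 3} : Set ℕ)) (a b c p : ℝ)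
    (ha : 0 < a) (hb : 0 < b) (hc : 0 < c) (hp : 0 < p) (hpN : p < 4 / (N : ℝ))
    (Q : EuclideanSpace ℝ (Fin N) → ℝ) (hQdiff : Differentiable ℝ Q)
    (hQ1 : (∫ x : EuclideanSpace ℝ (Fin N), ‖fderiv ℝ Q x‖ ^ 2) = ∫ x : EuclideanSpace ℝ (Fin N), (Q x) ^ 2)
    (hQ2 : (∫ x : EuclideanSpace ℝ (Fin N), (Q x) ^ 2) =
      2 / (p + 2) * ∫ x : EuclideanSpace ℝ (Fin N), |Q x| ^ (p + 2))
    (hQpos : 0 < ∫ x : EuclideanSpace ℝ (Fin N), (Q x) ^ 2)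
    (hGN : ∀ u : EuclideanSpace ℝ (Fin N) → ℝ, Differentiable ℝ u → Integrable (fun x => (u x) ^ 2) →
      Integrable (fun x => ‖fderiv ℝ u x‖ ^ 2) → Integrable (fun x => |u x| ^ (p + 2)) →
      (∫ x : EuclideanSpace ℝ (Fin N), |u x| ^ (p + 2)) ≤
        (p + 2) / (2 * (Real.sqrt (∫ x : EuclideanSpace ℝ (Fin N), (Q x) ^ 2)) ^ p) *
          (∫ x : EuclideanSpace ℝ (Fin N), ‖fderiv ℝ u x‖ ^ 2) ^ ((N : ℝ) * p / 4) *
          (∫ x : EuclideanSpace ℝ (Fin N), (u x) ^ 2) ^ ((2 * (p + 2) - (N : ℝ) * p) / 4))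
    (E : (EuclideanSpace ℝ (Fin N) → ℝ) → ℝ)
    (hE : ∀ u : EuclideanSpace ℝ (Fin N) → ℝ,
      E u = a / 2 * (∫ x : EuclideanSpace ℝ (Fin N), ‖fderiv ℝ u x‖ ^ 2) +
        b / 4 * (∫ x : EuclideanSpace ℝ (Fin N), ‖fderiv ℝ u x‖ ^ 2) ^ 2 -
        1 / (p + 2) * ∫ x : EuclideanSpace ℝ (Fin N), |u x| ^ (p + 2))
    (f : ℝ → ℝ)
    (hfp : ∀ t : ℝ, f t = a / 2 * t + b / 4 * t ^ 2 -
      c ^ ((2 * (p + 2) - (N : ℝ) * p) / 2) /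
        (2 * (Real.sqrt (∫ x : EuclideanSpace ℝ (Fin N), (Q x) ^ 2)) ^ p) * t ^ ((N : ℝ) * p / 4))
    (tp : ℝ) (htp : 0 < tp) (htpmin : ∀ t : ℝ, 0 < t → f tp ≤ f t) :
    IsGLB (E '' {u : EuclideanSpace ℝ (Fin N) → ℝ | Differentiable ℝ u ∧ Integrable (fun x => (u x) ^ 2) ∧
      Integrable (fun x => ‖fderiv ℝ u x‖ ^ 2) ∧ Integrable (fun x => |u x| ^ (p + 2)) ∧
      (∫ x : EuclideanSpace ℝ (Fin N), (u x) ^ 2) = c ^ 2}) (f tp) := by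
  -- Notation
  set IQ : ℝ := ∫ x : EuclideanSpace ℝ (Fin N), (Q x) ^ 2 with hIQdef
  set sQ : ℝ := Real.sqrt IQ with hsQdef
  have hsQ : 0 < sQ := Real.sqrt_pos.mpr hQpos
  have hsQ2 : sQ ^ 2 = IQ := Real.sq_sqrt hQpos.le
  have hp2 : (0:ℝ) < p + 2 := by linarith
  simp only [Set.mem_insert_iff, Set.mem_singleton_iff] at hN
  have hNpos : 0 < (N:ℝ) := by
    rcases hN with rfl | rfl | rfl <;> norm_num
  have hNp4 : 0 < (N:ℝ) * p / 4 := by positivity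
  -- `f tp ≤ 0`
  have hftple0 : f tp ≤ 0 := by
    have key : ∀ ε : ℝ, 0 < ε → ε ≤ 1 → f tp ≤ (a/2 + b/4) * ε := by
      intro ε hε hε1
      have h1 := htpmin ε hε
      rw [hfp ε] at h1
      have h2 : 0 ≤ c ^ ((2 * (p + 2) - (N : ℝ) * p) / 2) / (2 * sQ ^ p) *
          ε ^ ((N : ℝ) * p / 4) := by positivity
      have h3 : ε ^ 2 ≤ ε := by nlinarith
      nlinarith
    by_contra hcon
    push_neg at hcon
    have hab : 0 < a + b := by linarith
    set ε := min 1 (f tp / (a + b)) with hεdef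
    have hε : 0 < ε := lt_min one_pos (div_pos hcon hab)
    have hε1 : ε ≤ 1 := min_le_left _ _
    have h1 := key ε hε hε1
    have h4 : (a/2 + b/4) * ε < (a+b) * ε := by nlinarith
    have h5 : (a+b) * ε ≤ f tp := by
      calc (a+b)*ε ≤ (a+b)*(f tp/(a+b)) :=
            mul_le_mul_of_nonneg_left (min_le_right _ _) hab.le
        _ = f tp := by field_simp
    linarith
  -- Lower bound: `f tp` is a lower bound of the energy on the sphere
  have hlow : ∀ u : (EuclideanSpace ℝ (Fin N)) → ℝ, Differentiable ℝ u → Integrable (fun x => (u x) ^ 2) →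
      Integrable (fun x => ‖fderiv ℝ u x‖ ^ 2) → Integrable (fun x => |u x| ^ (p + 2)) →
      (∫ x : EuclideanSpace ℝ (Fin N), (u x) ^ 2) = c ^ 2 → f tp ≤ E u := by
    intro u hd hi1 hi2 hi3 hu
    set t := ∫ x : EuclideanSpace ℝ (Fin N), ‖fderiv ℝ u x‖ ^ 2 with htdef
    have ht0 : 0 ≤ t := integral_nonneg fun x => by positivity
    have hGNu := hGN u hd hi1 hi2 hi3
    rw [hu, ← htdef] at hGNu
    have hc2 : ((c ^ 2 : ℝ)) ^ ((2 * (p + 2) - (N : ℝ) * p) / 4)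
        = c ^ ((2 * (p + 2) - (N : ℝ) * p) / 2) := by
      rw [← Real.rpow_natCast c 2, ← Real.rpow_mul hc.le]
      congr 1
      push_cast
      ring
    rw [hc2] at hGNu
    rcases ht0.lt_or_eq with htpos | hteq
    · -- t > 0
      have hIu : 1/(p+2) * (∫ x : EuclideanSpace ℝ (Fin N), |u x| ^ (p + 2)) ≤
          c ^ ((2 * (p + 2) - (N : ℝ) * p) / 2) / (2 * sQ ^ p) *
            t ^ ((N : ℝ) * p / 4) := by
        have hm := mul_le_mul_of_nonneg_left hGNu
          (by positivity : (0:ℝ) ≤ 1/(p+2))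
        have heq : 1/(p+2) * ((p + 2) / (2 * sQ ^ p) * t ^ ((N : ℝ) * p / 4) *
            c ^ ((2 * (p + 2) - (N : ℝ) * p) / 2))
            = c ^ ((2 * (p + 2) - (N : ℝ) * p) / 2) / (2 * sQ ^ p) *
              t ^ ((N : ℝ) * p / 4) := by
          field_simp
        linarith [heq ▸ hm]
      calc f tp ≤ f t := htpmin t htpos
        _ ≤ E u := by
            rw [hfp t, hE u, ← htdef]
            linarith
    · -- t = 0
      have hzero : (0:ℝ) ^ ((N : ℝ) * p / 4) = 0 := Real.zero_rpow hNp4.ne'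
      rw [← hteq, hzero] at hGNu
      have hup0 : 0 ≤ ∫ x : EuclideanSpace ℝ (Fin N), |u x| ^ (p + 2) :=
        integral_nonneg fun x => by positivity
      have hup : (∫ x : EuclideanSpace ℝ (Fin N), |u x| ^ (p + 2)) = 0 := le_antisymm (by linarith) hup0
      have hEu : E u = 0 := by
        rw [hE u, ← htdef, ← hteq, hup]
        ring
      linarith
  -- Upper part: a rescaling of `Q` attains `f tp`
  obtain ⟨l, hl, hcl⟩ : ∃ l : ℝ, 0 < l ∧ c ^ 2 * l ^ 2 = tp := by
    refine ⟨Real.sqrt tp / c, div_pos (Real.sqrt_pos.mpr htp) hc, ?_⟩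
    rw [div_pow, Real.sq_sqrt htp.le]
    field_simp
  have hlNpos : 0 < l ^ ((N:ℝ)) := Real.rpow_pos_of_pos hl _
  obtain ⟨m, hm, hm2, L⟩ : ∃ m : ℝ, 0 < m ∧ m ^ 2 = c ^ 2 * l ^ ((N:ℝ)) / IQ ∧
      m ^ (p + 2) = c ^ (p + 2) * l ^ ((N:ℝ)/2 * (p + 2)) / sQ ^ (p + 2) := by
    refine ⟨c * l ^ ((N:ℝ)/2) / sQ, by positivity, ?_, ?_⟩
    · have hpowN : l ^ ((N:ℝ)/2) * l ^ ((N:ℝ)/2) = l ^ ((N:ℝ)) := by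
        rw [← Real.rpow_add hl]
        congr 1
        ring
      have hsq : sQ * sQ = IQ := Real.mul_self_sqrt hQpos.le
      rw [show (c * l ^ ((N:ℝ)/2) / sQ) ^ 2
          = c ^ 2 * (l ^ ((N:ℝ)/2) * l ^ ((N:ℝ)/2)) / (sQ * sQ) by ring, hpowN, hsq]
    · rw [Real.div_rpow (by positivity) hsQ.le,
        Real.mul_rpow hc.le (Real.rpow_nonneg hl.le _), ← Real.rpow_mul hl.le]
  have hcomp : ∀ F : (EuclideanSpace ℝ (Fin N)) → ℝ,
      (∫ x : EuclideanSpace ℝ (Fin N), F (l • x)) = (l ^ ((N:ℝ)))⁻¹ * ∫ x : EuclideanSpace ℝ (Fin N), F x := by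
    intro F
    rw [MeasureTheory.Measure.integral_comp_smul_of_nonneg volume F l (hR := hl.le)]
    simp [finrank_euclideanSpace, Real.rpow_natCast]
  set u : (EuclideanSpace ℝ (Fin N)) → ℝ := fun x => m * Q (l • x) with hudef
  have hderiv : ∀ x : EuclideanSpace ℝ (Fin N),
      fderiv ℝ u x = (m * l) • fderiv ℝ Q (l • x) := by
    intro x
    have h1 : HasFDerivAt (fun x : EuclideanSpace ℝ (Fin N) => l • x)
        (l • ContinuousLinearMap.id ℝ (EuclideanSpace ℝ (Fin N))) x := (hasFDerivAt_id x).const_smul l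
    have h2 := ((hQdiff (l • x)).hasFDerivAt.comp x h1).const_mul m
    have h3 : HasFDerivAt u ((m * l) • fderiv ℝ Q (l • x)) x := by
      convert h2 using 1
      all_goals (ext v; simp [hudef, mul_comm, mul_assoc, mul_left_comm])
    exact h3.fderiv
  -- the three integrals of `u`
  have A1 : (∫ x : EuclideanSpace ℝ (Fin N), (u x) ^ 2) = c ^ 2 := by
    have h : ∀ x : EuclideanSpace ℝ (Fin N), (u x) ^ 2 = m ^ 2 * (fun y => (Q y) ^ 2) (l • x) := by
      intro x; simp [hudef, mul_pow]
    simp only [h]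
    rw [integral_const_mul, hcomp (fun y => (Q y) ^ 2), ← hIQdef, hm2]
    field_simp
  have A2 : (∫ x : EuclideanSpace ℝ (Fin N), ‖fderiv ℝ u x‖ ^ 2) = tp := by
    have h : ∀ x : EuclideanSpace ℝ (Fin N), ‖fderiv ℝ u x‖ ^ 2
        = (m * l) ^ 2 * (fun y => ‖fderiv ℝ Q y‖ ^ 2) (l • x) := by
      intro x
      rw [hderiv x]
      simp [norm_smul, mul_pow, sq_abs]
    simp only [h]
    rw [integral_const_mul, hcomp (fun y => ‖fderiv ℝ Q y‖ ^ 2), hQ1]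
    rw [show (m * l) ^ 2 = m ^ 2 * l ^ 2 by ring, hm2]
    rw [← hcl]
    field_simp
  have A3 : (∫ x : EuclideanSpace ℝ (Fin N), |u x| ^ (p + 2))
      = m ^ (p + 2) * ((l ^ ((N:ℝ)))⁻¹ * ((p + 2) / 2 * IQ)) := by
    have hIP : (∫ x : EuclideanSpace ℝ (Fin N), |Q x| ^ (p + 2)) = (p + 2) / 2 * IQ := by
      field_simp at hQ2 ⊢
      linarith
    have h : ∀ x : EuclideanSpace ℝ (Fin N), |u x| ^ (p + 2)
        = m ^ (p + 2) * (fun y => |Q y| ^ (p + 2)) (l • x) := by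
      intro x
      simp only [hudef]
      rw [abs_mul, abs_of_pos hm, Real.mul_rpow hm.le (abs_nonneg _)]
    simp only [h]
    rw [integral_const_mul, hcomp (fun y => |Q y| ^ (p + 2)), hIP]
  -- the energy of `u` equals `f tp`
  have key : 1/(p+2) * (m ^ (p + 2) * ((l ^ ((N:ℝ)))⁻¹ * ((p + 2) / 2 * IQ)))
      = c ^ ((2 * (p + 2) - (N : ℝ) * p) / 2) / (2 * sQ ^ p) *
        tp ^ ((N : ℝ) * p / 4) := by
    have hclpos : 0 < c * l := by positivity
    have T : tp ^ ((N : ℝ) * p / 4) = c ^ ((N:ℝ) * p / 2) * l ^ ((N:ℝ) * p / 2) := by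
      have htp2 : tp = (c * l) ^ (2:ℕ) := by rw [pow_two]; linear_combination -hcl
      rw [htp2, ← Real.rpow_natCast (c * l) 2, ← Real.rpow_mul hclpos.le,
        show ((2:ℕ):ℝ) * ((N:ℝ) * p / 4) = (N:ℝ) * p / 2 by push_cast; ring,
        Real.mul_rpow hc.le hl.le]
    have hIQr : IQ = sQ ^ (2:ℝ) := by
      rw [Real.rpow_two, hsQ2]
    have e1 : l ^ ((N:ℝ)/2 * (p + 2)) * (l ^ ((N:ℝ)))⁻¹ = l ^ ((N:ℝ) * p / 2) := by
      rw [← Real.rpow_neg hl.le, ← Real.rpow_add hl]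
      congr 1
      ring
    have e2 : sQ ^ (2:ℝ) / sQ ^ (p + 2) = sQ ^ (-p) := by
      rw [← Real.rpow_sub hsQ]
      congr 1
      ring
    have e3 : c ^ ((2 * (p + 2) - (N : ℝ) * p) / 2) * c ^ ((N:ℝ) * p / 2)
        = c ^ (p + 2) := by
      rw [← Real.rpow_add hc]
      congr 1
      ring
    rw [L, T]
    calc 1/(p+2) * (c ^ (p + 2) * l ^ ((N:ℝ)/2 * (p + 2)) / sQ ^ (p + 2) *
          ((l ^ ((N:ℝ)))⁻¹ * ((p + 2) / 2 * IQ)))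
        = c ^ (p + 2) * (l ^ ((N:ℝ)/2 * (p + 2)) * (l ^ ((N:ℝ)))⁻¹) *
            (sQ ^ (2:ℝ) / sQ ^ (p + 2)) * ((p+2)/(p+2)/2) := by
          rw [hIQr]; ring
      _ = c ^ (p + 2) * l ^ ((N:ℝ) * p / 2) * sQ ^ (-p) / 2 := by
          rw [e1, e2, div_self hp2.ne']; ring
      _ = c ^ ((2 * (p + 2) - (N : ℝ) * p) / 2) / (2 * sQ ^ p) *
            (c ^ ((N:ℝ) * p / 2) * l ^ ((N:ℝ) * p / 2)) := by
          rw [← e3, Real.rpow_neg hsQ.le]; ring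
  have hEu : E u = f tp := by
    rw [hE u, A2, A3, hfp tp]
    rw [key]
  constructor
  · rintro y ⟨v, hv, rfl⟩
    exact hlow v hv.1 hv.2.1 hv.2.2.1 hv.2.2.2.1 hv.2.2.2.2
  · intro y hy
    have hudiff : Differentiable ℝ u :=
      show Differentiable ℝ (fun x => m * Q (l • x)) from
        (hQdiff.comp (differentiable_id.const_smul l)).const_mul m
    have hA3pos : 0 < m ^ (p + 2) * ((l ^ ((N:ℝ)))⁻¹ * ((p + 2) / 2 * IQ)) :=
      mul_pos (Real.rpow_pos_of_pos hm _) (mul_pos (inv_pos.mpr hlNpos) (mul_pos (by positivity) hQpos))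
    exact hy ⟨u, ⟨hudiff, Integrable.of_integral_ne_zero (by rw [A1]; exact (pow_pos hc 2).ne'),
      Integrable.of_integral_ne_zero (by rw [A2]; exact htp.ne'),
      Integrable.of_integral_ne_zero (by rw [A3]; exact hA3pos.ne'), A1⟩, hEu⟩
end

section
/- Let N ∈ {1,2,3}, a, b > 0, p = 4/N, and c > a^{N/4}‖Q‖_{L²}. Then I(c) = inf_{u∈S_c} E(u) = -(c^{4/N} - a‖Q‖_{L²}^{4/N})²/(4b‖Q‖_{L²}^{8/N}). -/
open MeasureTheory

lemma scale_fderiv (N : ℕ) (Q : (EuclideanSpace ℝ (Fin N)) → ℝ) (hQdiff : Differentiable ℝ Q)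
    (α l : ℝ) (x : EuclideanSpace ℝ (Fin N)) :
    fderiv ℝ (fun x => α * Q (l • x)) x = (α * l) • fderiv ℝ Q (l • x) := by
  have hg : (fun x : EuclideanSpace ℝ (Fin N) => Q (l • x)) = Q ∘ ⇑(l • ContinuousLinearMap.id ℝ (EuclideanSpace ℝ (Fin N))) := rfl
  have hgd : DifferentiableAt ℝ (fun x : EuclideanSpace ℝ (Fin N) => Q (l • x)) x := by
    rw [hg]
    exact (hQdiff _).comp x ((l • ContinuousLinearMap.id ℝ (EuclideanSpace ℝ (Fin N))).differentiableAt)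
  have h1 : fderiv ℝ (fun x : EuclideanSpace ℝ (Fin N) => Q (l • x)) x = l • fderiv ℝ Q (l • x) := by
    rw [hg, fderiv_comp x (hQdiff _) ((l • ContinuousLinearMap.id ℝ (EuclideanSpace ℝ (Fin N))).differentiableAt),
      ContinuousLinearMap.fderiv]
    rw [ContinuousLinearMap.comp_smul, ContinuousLinearMap.comp_id]
    congr 1
  rw [fderiv_const_mul hgd, h1, smul_smul]

lemma scale_integral (N : ℕ) (f : (EuclideanSpace ℝ (Fin N)) → ℝ) (l : ℝ) (hl : 0 ≤ l) :
    ∫ x : EuclideanSpace ℝ (Fin N), f (l • x) = (l ^ N)⁻¹ * ∫ x : EuclideanSpace ℝ (Fin N), f x := by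
  rw [Measure.integral_comp_smul_of_nonneg volume f l (hR := hl), finrank_euclideanSpace_fin,
    smul_eq_mul]

set_option maxHeartbeats 1000000 in
/-- For `p = 4/N` and `c > a^{N/4}‖Q‖_{L²}`, the infimum of the Kirchhoff
energy over the `L²`-sphere of radius `c` equals
`-(c^{4/N} - a‖Q‖_{L²}^{4/N})²/(4b‖Q‖_{L²}^{8/N})`. -/
theorem stmt13 (N : ℕ) (hN : N ∈ ({1, 2, 3} : Set ℕ)) (a b c p : ℝ)
    (ha : 0 < a) (hb : 0 < b) (hc : 0 < c) (hp : p = 4 / (N : ℝ))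
    (Q : EuclideanSpace ℝ (Fin N) → ℝ) (hQdiff : Differentiable ℝ Q)
    (hQ1 : (∫ x : EuclideanSpace ℝ (Fin N), ‖fderiv ℝ Q x‖ ^ 2) = ∫ x : EuclideanSpace ℝ (Fin N), (Q x) ^ 2)
    (hQ2 : (∫ x : EuclideanSpace ℝ (Fin N), (Q x) ^ 2) =
      2 / (p + 2) * ∫ x : EuclideanSpace ℝ (Fin N), |Q x| ^ (p + 2))
    (hQpos : 0 < ∫ x : EuclideanSpace ℝ (Fin N), (Q x) ^ 2)
    (hGN : ∀ u : EuclideanSpace ℝ (Fin N) → ℝ, Differentiable ℝ u → Integrable (fun x => (u x) ^ 2) →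
      Integrable (fun x => ‖fderiv ℝ u x‖ ^ 2) → Integrable (fun x => |u x| ^ (p + 2)) →
      (∫ x : EuclideanSpace ℝ (Fin N), |u x| ^ (p + 2)) ≤
        (p + 2) / (2 * (Real.sqrt (∫ x : EuclideanSpace ℝ (Fin N), (Q x) ^ 2)) ^ p) *
          (∫ x : EuclideanSpace ℝ (Fin N), ‖fderiv ℝ u x‖ ^ 2) ^ ((N : ℝ) * p / 4) *
          (∫ x : EuclideanSpace ℝ (Fin N), (u x) ^ 2) ^ ((2 * (p + 2) - (N : ℝ) * p) / 4))
    (hcbig : a ^ ((N : ℝ) / 4) * Real.sqrt (∫ x : EuclideanSpace ℝ (Fin N), (Q x) ^ 2) < c)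
    (E : (EuclideanSpace ℝ (Fin N) → ℝ) → ℝ)
    (hE : ∀ u : EuclideanSpace ℝ (Fin N) → ℝ,
      E u = a / 2 * (∫ x : EuclideanSpace ℝ (Fin N), ‖fderiv ℝ u x‖ ^ 2) +
        b / 4 * (∫ x : EuclideanSpace ℝ (Fin N), ‖fderiv ℝ u x‖ ^ 2) ^ 2 -
        1 / (p + 2) * ∫ x : EuclideanSpace ℝ (Fin N), |u x| ^ (p + 2)) :
    IsGLB (E '' {u : EuclideanSpace ℝ (Fin N) → ℝ | Differentiable ℝ u ∧ Integrable (fun x => (u x) ^ 2) ∧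
      Integrable (fun x => ‖fderiv ℝ u x‖ ^ 2) ∧ Integrable (fun x => |u x| ^ (p + 2)) ∧
      (∫ x : EuclideanSpace ℝ (Fin N), (u x) ^ 2) = c ^ 2})
      (-(c ^ (4 / (N : ℝ)) -
          a * (Real.sqrt (∫ x : EuclideanSpace ℝ (Fin N), (Q x) ^ 2)) ^ (4 / (N : ℝ))) ^ 2 /
        (4 * b * (Real.sqrt (∫ x : EuclideanSpace ℝ (Fin N), (Q x) ^ 2)) ^ (8 / (N : ℝ)))) := by
  have hN' : N = 1 ∨ N = 2 ∨ N = 3 := by simpa using hN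
  have hNpos : (0:ℝ) < (N:ℝ) := by rcases hN' with rfl | rfl | rfl <;> norm_num
  have hNne : (N:ℝ) ≠ 0 := ne_of_gt hNpos
  set m := ∫ x : EuclideanSpace ℝ (Fin N), (Q x) ^ 2 with hm_def
  set s := Real.sqrt m with hs_def
  have hs : 0 < s := Real.sqrt_pos.2 hQpos
  have hs2 : s ^ 2 = m := Real.sq_sqrt hQpos.le
  have hp0 : 0 < p := by rw [hp]; positivity
  have hp2 : (0:ℝ) < p + 2 := by linarith
  have hσ : 0 < s ^ p := Real.rpow_pos_of_pos hs p
  -- rewrite the goal exponents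
  have e1 : (4:ℝ) / (N:ℝ) = p := hp.symm
  have e2 : s ^ ((8:ℝ) / (N:ℝ)) = (s ^ p) ^ 2 := by
    rw [show (8:ℝ) / (N:ℝ) = p * 2 by rw [hp]; field_simp; ring,
      Real.rpow_mul hs.le]
    norm_num
  rw [e1, e2]
  -- basic exponent identities
  have hNp4 : (N:ℝ) * p / 4 = 1 := by rw [hp]; field_simp
  have hexp2 : (2 * (p + 2) - (N:ℝ) * p) / 4 = p / 2 := by
    rw [hp]; field_simp; ring
  have hc2p : ((c:ℝ) ^ 2) ^ (p / 2) = c ^ p := by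
    rw [← Real.rpow_natCast c 2, ← Real.rpow_mul hc.le]
    norm_num
    congr 1
    ring
  have hmp : m ^ (p / 2) = s ^ p := by
    rw [← hs2, ← Real.rpow_natCast s 2, ← Real.rpow_mul hs.le]
    norm_num
    congr 1
    ring
  -- c^p > a * s^p
  have hD : a * s ^ p < c ^ p := by
    have h0 : (0:ℝ) ≤ a ^ ((N:ℝ)/4) * s := by positivity
    have h1 := Real.rpow_lt_rpow h0 hcbig hp0
    rw [Real.mul_rpow (by positivity) hs.le, ← Real.rpow_mul ha.le,
      show (N:ℝ)/4 * p = 1 by rw [hp]; field_simp, Real.rpow_one] at h1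
    exact h1
  have hJ : (∫ x : EuclideanSpace ℝ (Fin N), |Q x| ^ (p + 2)) = (p + 2) / 2 * m := by
    rw [hm_def] at hQ2 ⊢
    field_simp at hQ2 ⊢
    linarith
  clear_value m s
  apply IsLeast.isGLB
  constructor
  · -- the value is attained
    set t : ℝ := (c ^ p / s ^ p - a) / b with ht_def
    have ht : 0 < t := by
      apply div_pos _ hb
      rw [sub_pos, lt_div_iff₀ hσ]
      linarith
    set l : ℝ := Real.sqrt t / c with hl_def
    have hl : 0 < l := div_pos (Real.sqrt_pos.2 ht) hc
    have hl2 : l ^ 2 = t / c ^ 2 := by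
      rw [hl_def, div_pow, Real.sq_sqrt ht.le]
    have hlN : (0:ℝ) < l ^ N := pow_pos hl N
    set X : ℝ := c ^ 2 * l ^ N / m with hX_def
    have hX : 0 < X := by positivity
    set α : ℝ := X ^ ((1:ℝ)/2) with hα_def
    have hα : 0 < α := Real.rpow_pos_of_pos hX _
    have hα2 : α ^ 2 = X := by
      rw [hα_def, ← Real.rpow_natCast (X ^ ((1:ℝ)/2)) 2, ← Real.rpow_mul hX.le]
      norm_num
    have hαp : α ^ p = c ^ p * l ^ 2 / s ^ p := by
      rw [hα_def, ← Real.rpow_mul hX.le, hX_def]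
      rw [show (1:ℝ)/2 * p = p/2 by ring]
      rw [Real.div_rpow (by positivity) hQpos.le, Real.mul_rpow (by positivity) hlN.le,
        hc2p, hmp, ← Real.rpow_natCast l N, ← Real.rpow_mul hl.le]
      congr 2
      rw [show (N:ℝ) * (p/2) = (2:ℕ) by rw [hp]; field_simp; ring, Real.rpow_natCast]
    set u₀ : (EuclideanSpace ℝ (Fin N)) → ℝ := fun x => α * Q (l • x) with hu₀
    -- mass of u₀
    have hmass : (∫ x : EuclideanSpace ℝ (Fin N), (u₀ x) ^ 2) = c ^ 2 := by
      have : ∀ x : EuclideanSpace ℝ (Fin N), (u₀ x) ^ 2 = α ^ 2 * ((fun y => (Q y) ^ 2) (l • x)) := by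
        intro x; simp [hu₀, mul_pow]
      simp only [this]
      rw [integral_const_mul, scale_integral N (fun y => (Q y) ^ 2) l hl.le, ← hm_def, hα2, hX_def]
      field_simp
    -- kinetic energy of u₀
    have hkin : (∫ x : EuclideanSpace ℝ (Fin N), ‖fderiv ℝ u₀ x‖ ^ 2) = t := by
      have : ∀ x : EuclideanSpace ℝ (Fin N), ‖fderiv ℝ u₀ x‖ ^ 2
          = (α * l) ^ 2 * ((fun y => ‖fderiv ℝ Q y‖ ^ 2) (l • x)) := by
        intro x
        rw [hu₀, scale_fderiv N Q hQdiff α l x, norm_smul, Real.norm_eq_abs, mul_pow, sq_abs]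
      simp only [this]
      rw [integral_const_mul, scale_integral N (fun y => ‖fderiv ℝ Q y‖ ^ 2) l hl.le, hQ1]
      rw [mul_pow, hα2, hX_def, hl2]
      field_simp
    -- potential energy of u₀
    have hpot : (∫ x : EuclideanSpace ℝ (Fin N), |u₀ x| ^ (p + 2)) = (p + 2) / 2 * (c ^ p / s ^ p * t) := by
      have : ∀ x : EuclideanSpace ℝ (Fin N), |u₀ x| ^ (p + 2)
          = α ^ (p + 2) * ((fun y => |Q y| ^ (p + 2)) (l • x)) := by
        intro x
        rw [hu₀]
        simp only []
        rw [abs_mul, abs_of_pos hα, Real.mul_rpow hα.le (abs_nonneg _)]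
      simp only [this]
      rw [integral_const_mul, scale_integral N (fun y => |Q y| ^ (p + 2)) l hl.le, hJ]
      have hsplit : α ^ (p + 2) = α ^ p * α ^ 2 := by
        rw [Real.rpow_add hα, ← Real.rpow_natCast α 2]
        norm_num
      rw [hsplit, hαp, hα2, hX_def, hl2]
      field_simp
    have hQi : Integrable (fun x => (Q x) ^ 2) := by
      by_contra h
      rw [integral_undef h] at hm_def
      linarith
    have hQg : Integrable (fun x => ‖fderiv ℝ Q x‖ ^ 2) := by
      by_contra h
      rw [integral_undef h] at hQ1
      linarith
    have hQp : Integrable (fun x => |Q x| ^ (p + 2)) := by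
      by_contra h
      rw [integral_undef h] at hJ
      have := mul_pos (div_pos hp2 two_pos) hQpos
      linarith
    have hdiff : Differentiable ℝ u₀ := by
      show Differentiable ℝ (fun x => α * Q (l • x))
      fun_prop
    have hint1 : Integrable (fun x => (u₀ x) ^ 2) := by
      show Integrable (fun x => (α * Q (l • x)) ^ 2)
      simp_rw [mul_pow]
      exact (hQi.comp_smul hl.ne').const_mul (α ^ 2)
    have hint2 : Integrable (fun x => ‖fderiv ℝ u₀ x‖ ^ 2) := by
      have : (fun x => ‖fderiv ℝ u₀ x‖ ^ 2) = fun x => (α * l) ^ 2 * ‖fderiv ℝ Q (l • x)‖ ^ 2 := by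
        funext x
        rw [hu₀, scale_fderiv N Q hQdiff α l x, norm_smul, Real.norm_eq_abs, mul_pow, sq_abs]
      rw [this]
      exact (hQg.comp_smul hl.ne').const_mul _
    have hint3 : Integrable (fun x => |u₀ x| ^ (p + 2)) := by
      have : (fun x => |u₀ x| ^ (p + 2)) = fun x => α ^ (p + 2) * |Q (l • x)| ^ (p + 2) := by
        funext x
        rw [hu₀]
        simp only []
        rw [abs_mul, abs_of_pos hα, Real.mul_rpow hα.le (abs_nonneg _)]
      rw [this]
      exact (hQp.comp_smul hl.ne').const_mul _
    refine ⟨u₀, ⟨hdiff, hint1, hint2, hint3, hmass⟩, ?_⟩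
    rw [hE u₀, hkin, hpot, ht_def]
    have hbne : b ≠ 0 := ne_of_gt hb
    have hσne : s ^ p ≠ 0 := ne_of_gt hσ
    field_simp
    ring
  · -- lower bound
    rintro y ⟨u, hu, rfl⟩
    simp only [Set.mem_setOf_eq] at hu
    rw [hE u]
    set T := ∫ x : EuclideanSpace ℝ (Fin N), ‖fderiv ℝ u x‖ ^ 2 with hT_def
    set P := ∫ x : EuclideanSpace ℝ (Fin N), |u x| ^ (p + 2) with hP_def
    have hT0 : 0 ≤ T := integral_nonneg fun x => by positivity
    have hgn := hGN u hu.1 hu.2.1 hu.2.2.1 hu.2.2.2.1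
    rw [hu.2.2.2.2, hNp4, Real.rpow_one, hexp2, hc2p, ← hT_def, ← hP_def] at hgn
    clear_value T P
    have h3 : 1 / (p + 2) * P ≤ c ^ p / (2 * s ^ p) * T := by
      calc 1 / (p + 2) * P ≤ 1 / (p + 2) * ((p + 2) / (2 * s ^ p) * T * c ^ p) := by
            apply mul_le_mul_of_nonneg_left hgn (by positivity)
        _ = c ^ p / (2 * s ^ p) * T := by field_simp
    have main : -(c ^ p - a * s ^ p) ^ 2 / (4 * b * (s ^ p) ^ 2)
        ≤ a / 2 * T + b / 4 * T ^ 2 - c ^ p / (2 * s ^ p) * T := by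
      have hkey : a / 2 * T + b / 4 * T ^ 2 - c ^ p / (2 * s ^ p) * T
          - (-(c ^ p - a * s ^ p) ^ 2 / (4 * b * (s ^ p) ^ 2))
          = (b * T * s ^ p - (c ^ p - a * s ^ p)) ^ 2 / (4 * b * (s ^ p) ^ 2) := by
        field_simp
        ring
      nlinarith [sq_nonneg (b * T * s ^ p - (c ^ p - a * s ^ p)),
        div_nonneg (sq_nonneg (b * T * s ^ p - (c ^ p - a * s ^ p)))
          (by positivity : (0:ℝ) ≤ 4 * b * (s ^ p) ^ 2)]
    linarith
end
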